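/- Let X be a T1 regular space. The following are equivalent: (1) the hyperspace K(X) of nonempty compact subsets with the Vietoris topology is a D_1-space; (2) F_n(X) with the Vietoris topology is a D_1-space for some n ≥ 2; (3) X is discrete or X is compact and metrizable. -/

import Mathlib

open Set TopologicalSpace

universe u v

/-- The Fell topology on the collection of all subsets of `X`, generated by the subbase
consisting of the sets `U⁻ = {H | H ∩ U ≠ ∅}` for `U` open and
`(Kᶜ)⁺ = {H | H ⊆ Kᶜ}` for `K` compact. -/
def fellTopology (X : Type u) [TopologicalSpace X] : TopologicalSpace (Set X) :=
  TopologicalSpace.generateFrom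
    ({S | ∃ U : Set X, IsOpen U ∧ S = {H : Set X | (H ∩ U).Nonempty}} ∪
     {S | ∃ K : Set X, IsCompact K ∧ S = {H : Set X | H ⊆ Kᶜ}})

/-- The Vietoris topology on the collection of all subsets of `X`, generated by the subbase
consisting of the sets `U⁺ = {H | H ⊆ U}` and `U⁻ = {H | H ∩ U ≠ ∅}` for `U` open. -/
def vietorisTopology (X : Type u) [TopologicalSpace X] : TopologicalSpace (Set X) :=
  TopologicalSpace.generateFrom
    ({S | ∃ U : Set X, IsOpen U ∧ S = {H : Set X | H ⊆ U}} ∪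
     {S | ∃ U : Set X, IsOpen U ∧ S = {H : Set X | (H ∩ U).Nonempty}})

/-- A collection `S` of subsets of `X`, viewed as a hyperspace with the Fell topology. -/
def FellHyper (X : Type u) [TopologicalSpace X] (S : Set (Set X)) : Type u :=
  {A : Set X // A ∈ S}

/-- A collection `S` of subsets of `X`, viewed as a hyperspace with the Vietoris topology. -/
def VietorisHyper (X : Type u) [TopologicalSpace X] (S : Set (Set X)) : Type u :=
  {A : Set X // A ∈ S}

instance FellHyper.instTopologicalSpace (X : Type u) [TopologicalSpace X] (S : Set (Set X)) :
    TopologicalSpace (FellHyper X S) :=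
  TopologicalSpace.induced (Subtype.val : {A : Set X // A ∈ S} → Set X) (fellTopology X)

instance VietorisHyper.instTopologicalSpace (X : Type u) [TopologicalSpace X] (S : Set (Set X)) :
    TopologicalSpace (VietorisHyper X S) :=
  TopologicalSpace.induced (Subtype.val : {A : Set X // A ∈ S} → Set X) (vietorisTopology X)

/-- The underlying subset of `X` of a point of a Fell hyperspace. -/
def FellHyper.carrier {X : Type u} [TopologicalSpace X] {S : Set (Set X)}
    (A : FellHyper X S) : Set X :=
  Subtype.val A

/-- The underlying subset of `X` of a point of a Vietoris hyperspace. -/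
def VietorisHyper.carrier {X : Type u} [TopologicalSpace X] {S : Set (Set X)}
    (A : VietorisHyper X S) : Set X :=
  Subtype.val A

/-- `CL(X)`: the nonempty closed subsets of `X`. -/
def CL (X : Type u) [TopologicalSpace X] : Set (Set X) := {A | A.Nonempty ∧ IsClosed A}

/-- `𝒦(X)`: the nonempty compact subsets of `X`. -/
def Kcal (X : Type u) [TopologicalSpace X] : Set (Set X) := {A | A.Nonempty ∧ IsCompact A}

/-- `ℱ(X)`: the nonempty finite subsets of `X`. -/
def Fcal (X : Type u) : Set (Set X) := {A | A.Nonempty ∧ A.Finite}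

/-- `ℱₙ(X)`: the nonempty subsets of `X` with at most `n` points. -/
def Fn (X : Type u) (n : ℕ) : Set (Set X) := {A | A.Nonempty ∧ A.encard ≤ n}

/-- A space is a `D₁`-space if every nonempty closed subset has a countable
neighborhood base. -/
def IsD1Space (Y : Type v) [TopologicalSpace Y] : Prop :=
  ∀ F : Set Y, F.Nonempty → IsClosed F →
    ∃ B : ℕ → Set Y, (∀ n, IsOpen (B n) ∧ F ⊆ B n) ∧
      ∀ V : Set Y, IsOpen V → F ⊆ V → ∃ n, B n ⊆ V

/-- A space is a `D₀`-space if every nonempty compact subset has a countable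
neighborhood base. -/
def IsD0Space (Y : Type v) [TopologicalSpace Y] : Prop :=
  ∀ F : Set Y, F.Nonempty → IsCompact F →
    ∃ B : ℕ → Set Y, (∀ n, IsOpen (B n) ∧ F ⊆ B n) ∧
      ∀ V : Set Y, IsOpen V → F ⊆ V → ∃ n, B n ⊆ V

/-- A space has a `G_δ`-diagonal if the diagonal is a `G_δ`-set in `X × X`. -/
def HasGdeltaDiagonal (X : Type u) [TopologicalSpace X] : Prop :=
  ∃ U : ℕ → Set (X × X), (∀ n, IsOpen (U n)) ∧ (⋂ n, U n) = {p : X × X | p.1 = p.2}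

/-- A space is perfect if every closed subset is a `G_δ`-set. -/
def IsPerfectSpace (Y : Type v) [TopologicalSpace Y] : Prop :=
  ∀ F : Set Y, IsClosed F → ∃ U : ℕ → Set Y, (∀ n, IsOpen (U n)) ∧ F = ⋂ n, U n

/-- A space has the compact-`G_δ` property if every compact subset is a `G_δ`-set. -/
def CompactGDeltaProperty (Y : Type v) [TopologicalSpace Y] : Prop :=
  ∀ K : Set Y, IsCompact K → ∃ U : ℕ → Set Y, (∀ n, IsOpen (U n)) ∧ K = ⋂ n, U n

/-- `γ`-space. -/
def IsGammaSpace (Y : Type v) [TopologicalSpace Y] : Prop :=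
  ∃ g : ℕ → Y → Set Y,
    (∀ n y, IsOpen (g n y) ∧ y ∈ g n y) ∧
    (∀ y, ∀ V : Set Y, IsOpen V → y ∈ V → ∃ n, g n y ⊆ V) ∧
    (∀ n y, ∃ m, ∀ z ∈ g m y, g m z ⊆ g n y)

/-- A space has a `G_δ*`-diagonal if there is a sequence `𝒰 n` of open covers such that
`{x} = ⋂ n, closure (st(x, 𝒰 n))` for every `x`. -/
def HasGdeltaStarDiagonal (X : Type u) [TopologicalSpace X] : Prop :=
  ∃ 𝒰 : ℕ → Set (Set X),
    (∀ n, ∀ U ∈ 𝒰 n, IsOpen U) ∧ (∀ n, ⋃₀ 𝒰 n = univ) ∧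
    ∀ x : X, (⋂ n, closure (⋃₀ {U ∈ 𝒰 n | x ∈ U})) = {x}

/-!
The map `(x, y) ↦ {x, y}` from `X × X` to `ℱₙ(X)`, `n ≥ 2`, pulls the neighbourhoods of the
closed set of singletons back to the neighbourhoods of the diagonal, so `D₁` gives the diagonal a
countable neighbourhood base. If `X` has a non-isolated point `p`, a countable base `B k` at the
closed set `{A | p ∈ A}` makes `X` countably compact: for a sequence `u` without cluster points,
pairs `{y k, u k} ∈ B k` with `y k ≠ p` would converge to that set, yet their closure misses it.
A countably compact regular space whose diagonal has a countable neighbourhood base is compact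
(an ultrafilter contains a basic ball around some point for every basic neighbourhood of the
diagonal, and converges to a cluster point of the centres), and then the neighbourhoods of the
diagonal form its uniformity, which is countably generated, so `X` is metrizable.

Conversely, `𝒦(X)` is discrete if `X` is, and compact, regular and second countable if `X` is
compact metrizable; in both cases it is `D₁`. Finally `ℱ₂(X)` is closed in `𝒦(X)`.
-/

open Filter Topology

attribute [local instance] TopologicalSpace.vietoris

section D1Space
variable {Y Z : Type*} [TopologicalSpace Y] [TopologicalSpace Z]

theorem isD1Space_iff_isCountablyGenerated_nhdsSet :
    IsD1Space Y ↔ ∀ F : Set Y, F.Nonempty → IsClosed F → (𝓝ˢ F).IsCountablyGenerated := by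
  refine forall₃_congr fun F _ _ => ⟨?_, fun _ => ?_⟩
  · rintro ⟨B, hBF, hB⟩
    refine isCountablyGenerated_of_seq ⟨B, le_antisymm
      (le_iInf fun k => le_principal_iff.2 ((hBF k).1.mem_nhdsSet.2 (hBF k).2)) fun s hs => ?_⟩
    obtain ⟨V, hV, hFV, hVs⟩ := mem_nhdsSet_iff_exists.1 hs
    obtain ⟨k, hk⟩ := hB V hV hFV
    exact mem_iInf_of_mem k (mem_principal.2 (hk.trans hVs))
  · obtain ⟨B, hB⟩ := (𝓝ˢ F).exists_antitone_basis
    refine ⟨fun k => interior (B k),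
      fun k => ⟨isOpen_interior, subset_interior_iff_mem_nhdsSet.2 (hB.mem k)⟩, fun V hV hFV => ?_⟩
    obtain ⟨k, -, hk⟩ := hB.1.mem_iff.1 (hV.mem_nhdsSet.2 hFV)
    exact ⟨k, interior_subset.trans hk⟩

theorem IsD1Space.of_isClosedEmbedding {f : Y → Z} (hf : IsClosedEmbedding f)
    (h : IsD1Space Z) : IsD1Space Y := by
  rw [isD1Space_iff_isCountablyGenerated_nhdsSet] at h ⊢
  intro F hF hFc
  have := h _ (hF.image f) (hf.isClosedMap F hFc)
  rw [hf.isInducing.nhdsSet_eq_comap]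
  infer_instance

theorem IsD1Space.of_discreteTopology [DiscreteTopology Y] : IsD1Space Y :=
  isD1Space_iff_isCountablyGenerated_nhdsSet.2 fun F _ _ => by
    rw [(isOpen_discrete F).nhdsSet_eq]
    infer_instance

theorem IsD1Space.of_compactSpace_of_metrizableSpace [CompactSpace Y] [MetrizableSpace Y] :
    IsD1Space Y := by
  let := metrizableSpaceMetric Y
  refine isD1Space_iff_isCountablyGenerated_nhdsSet.2 fun F _ hF => ?_
  refine ((Metric.hasBasis_nhdsSet_thickening hF.isCompact).to_hasBasis (p' := fun _ : ℕ => True)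
    (s' := fun k : ℕ => Metric.thickening (1 / ((k : ℝ) + 1)) F) (fun δ hδ => ?_)
    fun k _ => ⟨_, Nat.one_div_pos_of_nat, subset_rfl⟩).isCountablyGenerated
  obtain ⟨k, hk⟩ := exists_nat_one_div_lt hδ
  exact ⟨k, trivial, Metric.thickening_mono hk.le F⟩

end D1Space

theorem pair_mem_Fn {X : Type u} {n : ℕ} (hn : 2 ≤ n) (x y : X) : ({x, y} : Set X) ∈ Fn X n := by
  refine ⟨insert_nonempty x {y}, (encard_insert_le {y} x).trans ?_⟩
  rw [encard_singleton]
  exact_mod_cast hn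

theorem Fn_subset_Kcal {X : Type u} [TopologicalSpace X] (n : ℕ) : Fn X n ⊆ Kcal X :=
  fun _ hA => ⟨hA.1, (finite_of_encard_le_coe hA.2).isCompact⟩

namespace TopologicalSpace.vietoris
variable {X : Type u} [TopologicalSpace X]

theorem isOpen_setOf_lt_encard [T2Space X] (n : ℕ) : IsOpen {A : Set X | n < A.encard} := by
  refine isOpen_iff_mem_nhds.2 fun A hA => ?_
  obtain ⟨T, hTA, hT⟩ := exists_subset_encard_eq (Order.add_one_le_of_lt hA)
  have hTfin : T.Finite := finite_of_encard_eq_coe (k := n + 1) (by rw [hT]; norm_cast)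
  obtain ⟨U, hU, hUdisj⟩ := hTfin.t2_separation
  filter_upwards [(hTfin.isOpen_biInter fun t _ => isOpen_inter_nonempty_of_isOpen
    (hU t).2).mem_nhds (mem_iInter₂.2 fun t ht => ⟨t, hTA ht, (hU t).1⟩)] with B hB
  -- picking a point of `B` in each `U t` is injective on `T`, so `B` has more than `n` points
  choose! f hfB hfU using fun t ht => mem_iInter₂.1 hB t ht
  have hinj : InjOn f T := fun t ht t' ht' h =>
    hUdisj.elim ht ht' (not_disjoint_iff.2 ⟨f t, hfU t ht, h ▸ hfU t' ht'⟩)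
  calc (n : ℕ∞) < n + 1 := by norm_cast; exact Nat.lt_succ_self n
    _ = T.encard := hT.symm
    _ ≤ B.encard := encard_le_encard_of_injOn hfB hinj

theorem isClosed_setOf_subsingleton [T2Space X] : IsClosed {A : Set X | A.Subsingleton} := by
  have : {A : Set X | A.Subsingleton} = {∅} ∪ range ({·} : X → Set X) := by
    ext A
    refine ⟨fun h => h.eq_empty_or_singleton.imp id fun ⟨y, hy⟩ => ⟨y, hy.symm⟩, ?_⟩
    rintro (rfl | ⟨y, rfl⟩)
    exacts [subsingleton_empty, subsingleton_singleton]
  rw [this]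
  exact isClopen_singleton_empty.isClosed.union
    isClosedEmbedding_singleton.isClosed_range

theorem isClosed_setOf_mem [T1Space X] (p : X) : IsClosed {A : Set X | p ∈ A} := by
  simpa only [inter_singleton_nonempty] using
    isClosed_inter_nonempty_of_isClosed (isClosed_singleton (x := p))

theorem continuous_pair : Continuous fun q : X × X => ({q.1, q.2} : Set X) := by
  simp_rw [insert_eq]
  exact continuous_union.comp ((continuous_singleton.comp continuous_fst).prodMk
    (continuous_singleton.comp continuous_snd))

theorem setOf_prod_self_subset_mem_nhds {A : Set X} (hA : IsCompact A) {G : Set (X × X)}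
    (hG : IsOpen G) (hAG : A ×ˢ A ⊆ G) : {B : Set X | B ×ˢ B ⊆ G} ∈ 𝓝 A := by
  obtain ⟨u, v, hu, hv, hAu, hAv, huv⟩ := generalized_tube_lemma hA hA hG hAG
  filter_upwards [(hu.inter hv).powerset_vietoris.mem_nhds (subset_inter hAu hAv)] with B hB
  exact (Set.prod_mono (hB.trans inter_subset_left) (hB.trans inter_subset_right)).trans huv

end TopologicalSpace.vietoris

theorem vietorisTopology_eq_vietoris {X : Type u} [TopologicalSpace X] :
    vietorisTopology X = TopologicalSpace.vietoris X := by
  unfold vietorisTopology TopologicalSpace.vietoris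
  congr 1
  ext S
  simp [powerset, eq_comm]

namespace VietorisHyper
variable {X : Type u} [TopologicalSpace X] {n : ℕ}

theorem isEmbedding_carrier (S : Set (Set X)) :
    IsEmbedding (carrier : VietorisHyper X S → Set X) :=
  ⟨⟨by rw [← vietorisTopology_eq_vietoris]; rfl⟩, Subtype.val_injective⟩

def homeomorphNonemptyCompacts : VietorisHyper X (Kcal X) ≃ₜ NonemptyCompacts X where
  toFun A := ⟨⟨A.1, A.2.2⟩, A.2.1⟩
  invFun K := ⟨K, K.nonempty, K.isCompact⟩
  left_inv _ := rfl
  right_inv _ := rfl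
  continuous_toFun :=
    NonemptyCompacts.isEmbedding_coe.continuous_iff.2 (isEmbedding_carrier _).continuous
  continuous_invFun :=
    (isEmbedding_carrier _).continuous_iff.2 NonemptyCompacts.continuous_coe

def inclusion {S T : Set (Set X)} (h : S ⊆ T) :
    VietorisHyper X S → VietorisHyper X T :=
  fun A => ⟨A.1, h A.2⟩

theorem isEmbedding_inclusion {S T : Set (Set X)} (h : S ⊆ T) :
    IsEmbedding (inclusion h) :=
  (isEmbedding_carrier T).of_comp_iff.1 (isEmbedding_carrier S)

theorem isClosedEmbedding_inclusion_Fn_Kcal [T2Space X] (n : ℕ) :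
    IsClosedEmbedding (inclusion (Fn_subset_Kcal (X := X) n)) := by
  refine ⟨isEmbedding_inclusion _, ?_⟩
  have : range (inclusion (Fn_subset_Kcal (X := X) n)) = carrier ⁻¹' {A | n < A.encard}ᶜ := by
    ext A
    exact ⟨fun ⟨B, hB⟩ => hB ▸ not_lt.2 B.2.2, fun h => ⟨⟨A.1, A.2.1, not_lt.1 h⟩, rfl⟩⟩
  rw [this]
  exact (vietoris.isOpen_setOf_lt_encard n).isClosed_compl.preimage
    (isEmbedding_carrier _).continuous

def pair (hn : 2 ≤ n) (q : X × X) : VietorisHyper X (Fn X n) :=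
  ⟨{q.1, q.2}, pair_mem_Fn hn q.1 q.2⟩

theorem continuous_pair (hn : 2 ≤ n) : Continuous (pair (X := X) hn) :=
  (isEmbedding_carrier _).continuous_iff.2 vietoris.continuous_pair

end VietorisHyper

section Pair
variable {X : Type u} [TopologicalSpace X] {n : ℕ}

theorem nhdsSet_diagonal_eq_comap_pair (hn : 2 ≤ n) :
    𝓝ˢ (diagonal X) =
      comap (VietorisHyper.pair hn) (𝓝ˢ {A : VietorisHyper X (Fn X n) | A.1.Subsingleton}) := by
  refine le_antisymm ((VietorisHyper.continuous_pair hn).tendsto_nhdsSet ?_).le_comap fun s hs => ?_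
  · rintro ⟨x, y⟩ (rfl : x = y)
    show ({x, x} : Set X).Subsingleton
    simp
  obtain ⟨G, hG, hΔG, hGs⟩ := mem_nhdsSet_iff_exists.1 hs
  refine mem_comap.2 ⟨{A | A.1 ×ˢ A.1 ⊆ G}, mem_nhdsSet_iff_forall.2 fun A hA => ?_,
    fun q hq => hGs (hq (mk_mem_prod (mem_insert _ _) (mem_insert_of_mem _ rfl)))⟩
  rw [(VietorisHyper.isEmbedding_carrier _).nhds_eq_comap]
  refine preimage_mem_comap (vietoris.setOf_prod_self_subset_mem_nhds hA.isCompact hG ?_)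
  rintro ⟨x, y⟩ ⟨hx, hy⟩
  exact hΔG (hA hx hy)

theorem isCountablyGenerated_nhdsSet_diagonal [T2Space X] (hn : 2 ≤ n)
    (h : IsD1Space (VietorisHyper X (Fn X n))) : (𝓝ˢ (diagonal X)).IsCountablyGenerated := by
  rcases isEmpty_or_nonempty X with _ | ⟨⟨x⟩⟩
  · rw [eq_empty_of_isEmpty (diagonal X), nhdsSet_empty]
    infer_instance
  have : (𝓝ˢ {A : VietorisHyper X (Fn X n) | A.1.Subsingleton}).IsCountablyGenerated :=
    isD1Space_iff_isCountablyGenerated_nhdsSet.1 h _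
      ⟨VietorisHyper.pair hn (x, x), show ({x, x} : Set X).Subsingleton by simp⟩
      (vietoris.isClosed_setOf_subsingleton.preimage
        (VietorisHyper.isEmbedding_carrier _).continuous)
  rw [nhdsSet_diagonal_eq_comap_pair hn]
  infer_instance

end Pair

section CountablyCompact
variable {X : Type u} [TopologicalSpace X]

theorem IsCompact.exists_isOpen_eventually_notMem {K : Set X} (hK : IsCompact K) {u : ℕ → X}
    (hu : ∀ z, ¬MapClusterPt z atTop u) : ∃ G, IsOpen G ∧ K ⊆ G ∧ ∀ᶠ k in atTop, u k ∉ G := by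
  have : Disjoint (𝓝ˢ K) (map u atTop) :=
    hK.disjoint_nhdsSet_left.2 fun z _ => not_not.1 (clusterPt_iff_not_disjoint.not.1 (hu z))
  obtain ⟨G, ⟨hG, hKG⟩, hGu⟩ := (hasBasis_nhdsSet K).disjoint_iff_left.1 this
  exact ⟨G, hG, hKG, hGu⟩

theorem not_tendsto_pair_nhdsSet_setOf_mem [T1Space X] {p : X} {u y : ℕ → X}
    (hu : ∀ z, ¬MapClusterPt z atTop u) (hy : ∀ k, y k ≠ p) :
    ¬Tendsto (fun k => ({y k, u k} : Set X)) atTop (𝓝ˢ {K : Set X | IsCompact K ∧ p ∈ K}) := by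
  intro h
  obtain ⟨W, hW, hpW, hWu⟩ := (isCompact_singleton (x := p)).exists_isOpen_eventually_notMem hu
  obtain ⟨N, hN⟩ := eventually_atTop.1 hWu
  set T := (fun k => ({y k, u k} : Set X)) '' Ici N
  have hT : {K : Set X | IsCompact K ∧ p ∈ K} ⊆ (closure T)ᶜ := by
    rintro K ⟨hK, hpK⟩ hKT
    obtain ⟨G, hG, hKG, hGu⟩ := hK.exists_isOpen_eventually_notMem hu
    obtain ⟨M, hM⟩ := eventually_atTop.1 hGu
    -- `G` contains only the `u k` with `k < M`, and `W'` avoids their partners `y k`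
    have hW' : IsOpen (W \ y '' Iio M) := hW.sdiff ((finite_Iio M).image y).isClosed
    obtain ⟨_, ⟨hAG, q, hqA, hqW⟩, k, hk, rfl⟩ := mem_closure_iff.1 hKT _
      (hG.powerset_vietoris.inter (vietoris.isOpen_inter_nonempty_of_isOpen hW'))
      ⟨hKG, p, hpK, singleton_subset_iff.1 hpW, fun ⟨k, _, hk⟩ => hy k hk⟩
    have hkM : k < M := not_le.1 fun hMk => hM k hMk (hAG (mem_insert_of_mem _ rfl))
    rcases hqA with rfl | rfl
    · exact hqW.2 ⟨k, hkM, rfl⟩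
    · exact hN k hk hqW.1
  have hTc : ∀ᶠ k in atTop, ({y k, u k} : Set X) ∈ (closure T)ᶜ :=
    h (isClosed_closure.isOpen_compl.mem_nhdsSet.2 hT)
  obtain ⟨k, hkT, hk⟩ := (hTc.and (eventually_ge_atTop N)).exists
  exact hkT (subset_closure ⟨k, hk, rfl⟩)

theorem exists_mapClusterPt_of_isD1Space_Fn [T1Space X] {n : ℕ} (hn : 2 ≤ n)
    (h : IsD1Space (VietorisHyper X (Fn X n))) {p : X} (hp : (𝓝[≠] p).NeBot) (u : ℕ → X) :
    ∃ z, MapClusterPt z atTop u := by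
  by_contra! hu
  set F := {A : VietorisHyper X (Fn X n) | p ∈ A.1}
  have : (𝓝ˢ F).IsCountablyGenerated := isD1Space_iff_isCountablyGenerated_nhdsSet.1 h F
    ⟨VietorisHyper.pair hn (p, p), mem_insert p _⟩
    ((vietoris.isClosed_setOf_mem p).preimage (VietorisHyper.isEmbedding_carrier _).continuous)
  obtain ⟨B, hB⟩ := (𝓝ˢ F).exists_antitone_basis
  have hy : ∀ k, ∃ y ≠ p, VietorisHyper.pair hn (y, u k) ∈ B k := by
    intro k
    have : {y | VietorisHyper.pair hn (y, u k) ∈ B k} ∈ 𝓝 p :=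
      ((VietorisHyper.continuous_pair hn).comp (continuous_id.prodMk continuous_const)).continuousAt
        |>.preimage_mem_nhds (mem_nhdsSet_iff_forall.1 (hB.mem k) _ (mem_insert p _))
    obtain ⟨y, hyp, hyB⟩ := hp.nonempty_of_mem (inter_mem_nhdsWithin _ this)
    exact ⟨y, hyp, hyB⟩
  choose y hyp hyB using hy
  refine not_tendsto_pair_nhdsSet_setOf_mem hu hyp ?_
  refine (((VietorisHyper.isEmbedding_carrier _).continuous.tendsto_nhdsSet (mapsTo_image _ F)).comp
    (hB.tendsto hyB)).mono_right (nhdsSet_mono ?_)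
  rintro _ ⟨A, hA, rfl⟩
  exact ⟨(finite_of_encard_le_coe A.2.2).isCompact, hA⟩

end CountablyCompact

section Diagonal
variable {X : Type u} [TopologicalSpace X]

theorem exists_finset_forall_mem_of_mem_nhdsSet_diagonal
    (hX : ∀ u : ℕ → X, ∃ z, MapClusterPt z atTop u) {R : Set (X × X)}
    (hR : R ∈ 𝓝ˢ (diagonal X)) : ∃ t : Finset X, ∀ y, ∃ x ∈ t, (x, y) ∈ R := by
  by_contra! h
  obtain ⟨x, -, hx⟩ := exists_seq_of_forall_finset_exists (fun _ => True) (fun a b => (a, b) ∉ R)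
    fun t _ => (h t).imp fun _ hy => ⟨trivial, hy⟩
  obtain ⟨z, hz⟩ := hX x
  obtain ⟨V, hV, hVR⟩ := mem_prod_self_iff.1
    (nhds_prod_eq (x := z) (y := z) ▸ mem_nhdsSet_iff_forall.1 hR (z, z) (mem_diagonal z))
  obtain ⟨j, -, hj⟩ := (hz.frequently hV).forall_exists_of_atTop 0
  obtain ⟨k, hjk, hk⟩ := (hz.frequently hV).forall_exists_of_atTop (j + 1)
  exact hx j k hjk (hVR ⟨hj, hk⟩)

theorem compactSpace_of_isCountablyGenerated_nhdsSet_diagonal [RegularSpace X]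
    [(𝓝ˢ (diagonal X)).IsCountablyGenerated] (hX : ∀ u : ℕ → X, ∃ z, MapClusterPt z atTop u) :
    CompactSpace X := by
  obtain ⟨R, hR⟩ := (𝓝ˢ (diagonal X)).exists_antitone_basis
  refine ⟨isCompact_iff_ultrafilter_le_nhds.2 fun 𝔲 _ => ?_⟩
  have hball : ∀ k, ∃ x, {y | (x, y) ∈ R k} ∈ 𝔲 := by
    intro k
    obtain ⟨t, ht⟩ := exists_finset_forall_mem_of_mem_nhdsSet_diagonal hX (hR.mem k)
    have : ⋃ x ∈ (t : Set X), {y | (x, y) ∈ R k} ∈ 𝔲 :=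
      univ_mem' fun y => let ⟨x, hxt, hxy⟩ := ht y; mem_iUnion₂.2 ⟨x, hxt, hxy⟩
    obtain ⟨x, -, hx⟩ := (Ultrafilter.finite_biUnion_mem_iff t.finite_toSet).1 this
    exact ⟨x, hx⟩
  choose x hx using hball
  obtain ⟨z, hz⟩ := hX x
  refine ⟨z, mem_univ z, fun U hU => ?_⟩
  obtain ⟨C, hC, hCc, hCU⟩ := exists_mem_nhds_isClosed_subset (interior_mem_nhds.2 hU)
  -- a pair in `G` whose first point lies in `C` has its second point in `U`
  have hG : interior U ×ˢ interior U ∪ Cᶜ ×ˢ Cᶜ ∈ 𝓝ˢ (diagonal X) := by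
    refine ((isOpen_interior.prod isOpen_interior).union
      (hCc.isOpen_compl.prod hCc.isOpen_compl)).mem_nhdsSet.2 ?_
    rintro ⟨a, b⟩ (rfl : a = b)
    by_cases ha : a ∈ C
    exacts [Or.inl ⟨hCU ha, hCU ha⟩, Or.inr ⟨ha, ha⟩]
  obtain ⟨k, hk⟩ := hR.mem_iff.1 hG
  obtain ⟨m, hxm, hkm⟩ := ((hz.frequently hC).and_eventually (eventually_ge_atTop k)).exists
  refine mem_of_superset (hx m) fun y hy => ?_
  rcases hk (hR.antitone hkm hy) with ⟨-, hyU⟩ | ⟨hxC, -⟩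
  exacts [interior_subset hyU, absurd hxm hxC]

theorem metrizableSpace_of_isCountablyGenerated_nhdsSet_diagonal [CompactSpace X] [T2Space X]
    [h : (𝓝ˢ (diagonal X)).IsCountablyGenerated] : MetrizableSpace X :=
  let _ := uniformSpaceOfCompactR1 (γ := X)
  have : (uniformity X).IsCountablyGenerated := h
  UniformSpace.metrizableSpace

end Diagonal

/-- characterization of spaces whose Vietoris hyperspaces are `D₁`-spaces. -/
theorem statement5 (X : Type u) [TopologicalSpace X] [T1Space X] [RegularSpace X] :
    List.TFAE
      [IsD1Space (VietorisHyper X (Kcal X)),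
       ∃ n, 2 ≤ n ∧ IsD1Space (VietorisHyper X (Fn X n)),
       DiscreteTopology X ∨ (CompactSpace X ∧ TopologicalSpace.MetrizableSpace X)] := by
  tfae_have 1 → 2 := fun h =>
    ⟨2, le_rfl, h.of_isClosedEmbedding (VietorisHyper.isClosedEmbedding_inclusion_Fn_Kcal 2)⟩
  tfae_have 2 → 3 := by
    rintro ⟨n, hn, h⟩
    refine or_iff_not_imp_left.2 fun hX => ?_
    obtain ⟨p, hp⟩ : ∃ p : X, (𝓝[≠] p).NeBot := by
      simpa [discreteTopology_iff_nhds_ne, ← neBot_iff] using hX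
    have := isCountablyGenerated_nhdsSet_diagonal hn h
    have := compactSpace_of_isCountablyGenerated_nhdsSet_diagonal
      (exists_mapClusterPt_of_isD1Space_Fn hn h hp)
    exact ⟨this, metrizableSpace_of_isCountablyGenerated_nhdsSet_diagonal⟩
  tfae_have 3 → 1 := by
    refine fun hX => IsD1Space.of_isClosedEmbedding
      VietorisHyper.homeomorphNonemptyCompacts.isClosedEmbedding ?_
    rcases hX with _ | ⟨_, _⟩
    · exact IsD1Space.of_discreteTopology
    · have := (NonemptyCompacts.isClosedEmbedding_toCompacts (α := X)).compactSpace
      have := metrizableSpace_of_t3_secondCountable (NonemptyCompacts X)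
      exact IsD1Space.of_compactSpace_of_metrizableSpace
  tfae_finish
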